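/- In the two-target zero-sum SSG with rational attacker, suppose the true values are z0 ≥ z1 with z0 + z1 = 1 and the defender's estimate (ẑ0, ẑ1) satisfies ẑ0 + ẑ1 = 1 and has mean squared error ε² = ((ẑ0 - z0)² + (ẑ1 - z1)²)/2 (so the estimate is either (z0 + ε, z1 - ε) or (z0 - ε, z1 + ε)). If ε² ≤ (1 - z0)², then: when ẑ1 = z1 - ε (value of the smaller target underestimated), the rational attacker attacks target 1 and the defender's utility is -(1 - (z1 - ε)) z1; when ẑ0 = z0 - ε, the attacker attacks target 0 and the defender's utility is -(1 - (z0 - ε)) z0; and -(1 - (z0 - ε)) z0 ≤ -(1 - (z1 - ε)) z1. -/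
import Mathlib


/-- Two-target zero-sum SSG: the defender covers according to an estimate with
MSE `ε²` (i.e. `(z0 ± ε, z1 ∓ ε)`), assuming `ε² ≤ (1 - z0)²`.  When `ẑ1 = z1 - ε`,
the attacker attacks target 1, giving defender utility `-(1 - (z1 - ε)) z1`;
when `ẑ0 = z0 - ε`, the attacker attacks target 0, giving `-(1 - (z0 - ε)) z0`;
and the latter utility is at most the former. -/
theorem stmt2 (z0 z1 ε : ℝ) (hz1 : 0 ≤ z1) (hge : z1 ≤ z0) (hsum : z0 + z1 = 1)
    (hε : 0 < ε) (hmse : ε ^ 2 ≤ (1 - z0) ^ 2) :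
    -- under coverage (z0 + ε, z1 - ε) the attacker attacks target 1:
    (1 - (z0 + ε)) * z0 ≤ (1 - (z1 - ε)) * z1 ∧
    -- under coverage (z0 - ε, z1 + ε) the attacker attacks target 0:
    (1 - (z1 + ε)) * z1 ≤ (1 - (z0 - ε)) * z0 ∧
    -- comparison of the two resulting defender utilities:
    -((1 - (z0 - ε)) * z0) ≤ -((1 - (z1 - ε)) * z1) := by
  refine ⟨by nlinarith, by nlinarith, by nlinarith⟩
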